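/- In any generalized grid graph with rows [0..N] and diagonal range [−t..t], for every diagonal d ∈ [−t..t] such that (N,d) is reachable, the number of rows i ∈ [0..N−1] such that (i,d) is reachable, potent, and w(i+1,d) = 1 is at most c(N,d) − |d|. -/

import Mathlib

namespace Stmt16

/-- Total weight of a list of vertices regarded as a walk. -/
def pathCost {V : Type*} (wt : V → V → ℕ) : List V → ℕ
  | [] => 0
  | [_] => 0
  | a :: b :: l => wt a b + pathCost wt (b :: l)

/-- `l` is a directed path (walk) from `s` to `v` in the graph with edge relation `E`. -/
def IsPath {V : Type*} (E : V → V → Prop) (s v : V) (l : List V) : Prop :=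
  l.head? = some s ∧ l.getLast? = some v ∧ l.Chain' E

/-- Shortest-path cost from `s` to `v`. -/
noncomputable def cost {V : Type*} (E : V → V → Prop) (wt : V → V → ℕ) (s v : V) : ℕ :=
  sInf { c | ∃ l : List V, IsPath E s v l ∧ pathCost wt l = c }

/-- Vertices of a generalized grid graph with rows `[0..N]` and diagonals `[-t..t]`. -/
def ggVertex (N t : ℕ) (v : ℤ × ℤ) : Prop :=
  0 ≤ v.1 ∧ v.1 ≤ (N : ℤ) ∧ -(t : ℤ) ≤ v.2 ∧ v.2 ≤ (t : ℤ)

/-- Edges of a generalized grid graph: deletion edges `(i,d) → (i+1,d-1)`,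
insertion edges `(i,d) → (i,d+1)`, vertical edges `(i,d) → (i+1,d)`;
present only when both endpoints are vertices. -/
def ggEdge (N t : ℕ) (u v : ℤ × ℤ) : Prop :=
  ggVertex N t u ∧ ggVertex N t v ∧
    (v = (u.1 + 1, u.2 - 1) ∨ v = (u.1, u.2 + 1) ∨ v = (u.1 + 1, u.2))

/-- Weights: a vertical edge `(i,d) → (i+1,d)` has weight `w (i+1) d`;
deletion and insertion edges have weight `1`. -/
def ggWt (w : ℤ → ℤ → ℕ) (u v : ℤ × ℤ) : ℕ :=
  if v = (u.1 + 1, u.2) then w v.1 v.2 else 1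

/-- A vertex `(i,d)` is reachable if `i + d ≥ 0`. -/
def Reachable (N t : ℕ) (v : ℤ × ℤ) : Prop := ggVertex N t v ∧ 0 ≤ v.1 + v.2

/-- Shortest-path cost `c(i,d)` from `(0,0)` in the generalized grid graph. -/
noncomputable def ggCost (N t : ℕ) (w : ℤ → ℤ → ℕ) (v : ℤ × ℤ) : ℕ :=
  cost (ggEdge N t) (ggWt w) (0, 0) v

/-- `(i,d)` is dominated by `(i,d-1)`. -/
def DomL (N t : ℕ) (w : ℤ → ℤ → ℕ) (v : ℤ × ℤ) : Prop :=
  Reachable N t v ∧ Reachable N t (v.1, v.2 - 1) ∧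
    ggCost N t w (v.1, v.2 - 1) + 1 = ggCost N t w v

/-- `(i,d)` is dominated by `(i-1,d+1)`. -/
def DomU (N t : ℕ) (w : ℤ → ℤ → ℕ) (v : ℤ × ℤ) : Prop :=
  Reachable N t v ∧ Reachable N t (v.1 - 1, v.2 + 1) ∧
    ggCost N t w (v.1 - 1, v.2 + 1) + 1 = ggCost N t w v

/-- Potency, defined by (well-founded, hence unambiguous) recursion in
lexicographic order: `(i,d)` is potent iff (dominated by `(i,d-1)` implies
`(i,d-1)` potent and `w (i+1) (d-1) = 1`) and (dominated by `(i-1,d+1)` implies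
`(i-1,d+1)` potent and `w i (d+1) = 1`). -/
inductive Potent (N t : ℕ) (w : ℤ → ℤ → ℕ) : ℤ × ℤ → Prop where
  | mk : ∀ v : ℤ × ℤ,
      (DomL N t w v → Potent N t w (v.1, v.2 - 1)) →
      (DomL N t w v → w (v.1 + 1) (v.2 - 1) = 1) →
      (DomU N t w v → Potent N t w (v.1 - 1, v.2 + 1)) →
      (DomU N t w v → w v.1 (v.2 + 1) = 1) →
      Potent N t w v

/-!
Every edge changes the diagonal by at most its weight, so `c(i, d) ≥ |d|`. By induction along
optimal paths (Bellman's equation), `c(i, d) ≤ c(i, d + 1) + 1` and `c(i, d) ≤ c(i + 1, d)`: costs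
never decrease down a diagonal. If `(i, d)` is potent and `(i + 1, d)` has a mismatch, the cost
even increases strictly from row `i` to row `i + 1`: otherwise an optimal path into `(i + 1, d)`
enters diagonally, which forces `(i, d)` to be dominated by the neighbour on that side, and
potency passes the same situation on to that neighbour. Hence the counted rows have pairwise
distinct costs, all in `[|d|, c(N, d))`.
-/

section Paths

variable {V : Type*} {E : V → V → Prop} {wt : V → V → ℕ} {s u v : V} {l : List V}

theorem pathCost_append_singleton (h : l.getLast? = some u) :
    pathCost wt (l ++ [v]) = pathCost wt l + wt u v := by
  induction l with
  | nil => simp at h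
  | cons a l ih =>
    cases l with
    | nil => simp_all [pathCost]
    | cons b l =>
      rw [List.getLast?_cons_cons] at h
      simp only [List.cons_append, pathCost] at ih ⊢
      rw [ih h, Nat.add_assoc]

theorem IsPath.append_singleton (h : IsPath E s u l) (he : E u v) :
    IsPath E s v (l ++ [v]) := by
  obtain ⟨hs, hu, hl⟩ := h
  refine ⟨?_, by simp, List.isChain_append.2 ⟨hl, List.isChain_singleton v, ?_⟩⟩
  · rw [List.head?_append, hs]; rfl
  · simp_all

theorem IsPath.exists_last_edge (h : IsPath E s v l) (hsv : s ≠ v) :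
    ∃ u l', IsPath E s u l' ∧ E u v ∧ l = l' ++ [v] := by
  obtain ⟨hs, hv, hl⟩ := h
  have hsplit : l.dropLast ++ [v] = l := List.dropLast_append_getLast? v hv
  obtain ⟨u, hu⟩ : ∃ u, l.dropLast.getLast? = some u := by
    refine Option.isSome_iff_exists.1 (List.getLast?_isSome.2 fun hnil => hsv ?_)
    rw [hnil] at hsplit
    simpa [← hsplit] using hs.symm
  have hchain : List.IsChain E (l.dropLast ++ [v]) := by rw [hsplit]; exact hl
  rw [List.isChain_append] at hchain
  refine ⟨u, l.dropLast, ⟨?_, hu, hchain.1⟩, hchain.2.2 u hu v rfl, hsplit.symm⟩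
  rw [← hs]
  conv_rhs => rw [← hsplit]
  refine (List.head?_append_of_ne_nil _ fun hnil => ?_).symm
  simp [hnil] at hu

theorem cost_le_pathCost (h : IsPath E s v l) : cost E wt s v ≤ pathCost wt l :=
  Nat.sInf_le ⟨l, h, rfl⟩

theorem IsPath.exists_pathCost_eq_cost (h : IsPath E s v l) :
    ∃ l', IsPath E s v l' ∧ pathCost wt l' = cost E wt s v :=
  Nat.sInf_mem (s := {c | ∃ l, IsPath E s v l ∧ pathCost wt l = c}) ⟨_, l, h, rfl⟩

theorem cost_le_cost_add (hu : IsPath E s u l) (he : E u v) :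
    cost E wt s v ≤ cost E wt s u + wt u v := by
  obtain ⟨l', hl', hcost⟩ := hu.exists_pathCost_eq_cost (wt := wt)
  calc cost E wt s v ≤ pathCost wt (l' ++ [v]) := cost_le_pathCost (hl'.append_singleton he)
    _ = cost E wt s u + wt u v := by rw [pathCost_append_singleton hl'.2.1, hcost]

theorem IsPath.exists_cost_add_eq_cost (h : IsPath E s v l) (hsv : s ≠ v) :
    ∃ u l', IsPath E s u l' ∧ E u v ∧ cost E wt s u + wt u v = cost E wt s v := by
  obtain ⟨l₀, hl₀, hcost⟩ := h.exists_pathCost_eq_cost (wt := wt)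
  obtain ⟨u, l', hl', he, rfl⟩ := hl₀.exists_last_edge hsv
  refine ⟨u, l', hl', he, le_antisymm ?_ (cost_le_cost_add hl' he)⟩
  rw [← hcost, pathCost_append_singleton hl'.2.1]
  exact Nat.add_le_add_right (cost_le_pathCost hl') _

theorem IsPath.apply_le_of_forall_edge {f : V → ℤ} (h : IsPath E s v l)
    (hf : ∀ a b, E a b → f a ≤ f b) : f s ≤ f v := by
  induction l generalizing s with
  | nil => simp [IsPath] at h
  | cons a l ih =>
    obtain ⟨hs, hv, hl⟩ := h
    cases l with
    | nil => simp_all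
    | cons b l =>
      simp only [List.head?_cons, Option.some.injEq] at hs
      subst hs
      replace hl := List.isChain_cons_cons.1 hl
      exact (hf _ _ hl.1).trans (ih ⟨rfl, hv, hl.2⟩)

theorem IsPath.sub_le_pathCost {f : V → ℤ} (h : IsPath E s v l)
    (hf : ∀ a b, E a b → f b - f a ≤ wt a b) : f v - f s ≤ pathCost wt l := by
  induction l generalizing s with
  | nil => simp [IsPath] at h
  | cons a l ih =>
    obtain ⟨hs, hv, hl⟩ := h
    cases l with
    | nil => simp_all [pathCost]
    | cons b l =>
      simp only [List.head?_cons, Option.some.injEq] at hs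
      subst hs
      replace hl := List.isChain_cons_cons.1 hl
      have := ih ⟨rfl, hv, hl.2⟩
      have := hf _ _ hl.1
      simp only [pathCost]
      push_cast
      omega

end Paths

section GridGraph

variable {N t : ℕ} {w : ℤ → ℤ → ℕ} {i j d : ℤ} {u v : ℤ × ℤ} {l : List (ℤ × ℤ)}

theorem reachable_mk_iff :
    Reachable N t (i, d) ↔ 0 ≤ i ∧ i ≤ N ∧ -(t : ℤ) ≤ d ∧ d ≤ t ∧ 0 ≤ i + d := by
  simp only [Reachable, ggVertex, and_assoc]

theorem ggWt_of_snd_ne (h : v.2 ≠ u.2) : ggWt w u v = 1 := by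
  rw [ggWt, if_neg fun huv => h (by rw [huv])]

theorem ggEdge.fst_add_snd_le (h : ggEdge N t u v) : u.1 + u.2 ≤ v.1 + v.2 := by
  obtain ⟨-, -, rfl | rfl | rfl⟩ := h <;> dsimp only <;> omega

theorem ggEdge.abs_snd_sub_le (h : ggEdge N t u v) : |v.2| - |u.2| ≤ ggWt w u v := by
  obtain ⟨-, -, rfl | rfl | rfl⟩ := h
  · rw [ggWt_of_snd_ne (by dsimp only; omega)]
    simpa using abs_sub_abs_le_abs_sub (u.2 - 1) u.2
  · rw [ggWt_of_snd_ne (by dsimp only; omega)]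
    simpa using abs_sub_abs_le_abs_sub (u.2 + 1) u.2
  · simp

theorem reachable_of_isPath (h : IsPath (ggEdge N t) (0, 0) v l) : Reachable N t v := by
  refine ⟨?_, by simpa using h.apply_le_of_forall_edge fun _ _ he => he.fst_add_snd_le⟩
  by_cases h0 : ((0, 0) : ℤ × ℤ) = v
  · subst h0
    exact ⟨le_rfl, by omega, by omega, by omega⟩
  · obtain ⟨_, _, -, he, -⟩ := h.exists_last_edge h0
    exact he.2.1

theorem exists_isPath_of_reachable {i d : ℤ} (h : Reachable N t (i, d)) :
    ∃ l, IsPath (ggEdge N t) (0, 0) (i, d) l := by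
  have hb := reachable_mk_iff.1 h
  by_cases h0 : i = 0 ∧ d = 0
  · obtain ⟨rfl, rfl⟩ := h0
    exact ⟨[(0, 0)], rfl, rfl, List.isChain_singleton _⟩
  by_cases hvert : 0 < i ∧ 0 ≤ i - 1 + d
  · have hu : Reachable N t (i - 1, d) := reachable_mk_iff.2 (by omega)
    obtain ⟨l, hl⟩ := exists_isPath_of_reachable hu
    exact ⟨_, hl.append_singleton ⟨hu.1, h.1, Or.inr (Or.inr (by simp))⟩⟩
  by_cases hdel : 0 < i
  · have hu : Reachable N t (i - 1, d + 1) := reachable_mk_iff.2 (by omega)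
    obtain ⟨l, hl⟩ := exists_isPath_of_reachable hu
    exact ⟨_, hl.append_singleton ⟨hu.1, h.1, Or.inl (by simp)⟩⟩
  · have hu : Reachable N t (i, d - 1) := reachable_mk_iff.2 (by omega)
    obtain ⟨l, hl⟩ := exists_isPath_of_reachable hu
    exact ⟨_, hl.append_singleton ⟨hu.1, h.1, Or.inr (Or.inl (by simp))⟩⟩
termination_by (2 * i + d).toNat

theorem natAbs_le_ggCost (h : Reachable N t (i, d)) : d.natAbs ≤ ggCost N t w (i, d) := by
  obtain ⟨l₀, hl₀⟩ := exists_isPath_of_reachable h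
  obtain ⟨l, hl, hcost⟩ := hl₀.exists_pathCost_eq_cost (wt := ggWt w)
  have := hl.sub_le_pathCost (f := fun v => |v.2|) fun _ _ he => he.abs_snd_sub_le (w := w)
  rw [ggCost, ← hcost]
  simp only [abs_zero, sub_zero, Int.abs_eq_natAbs] at this
  omega

theorem ggCost_le_of_ggEdge (hu : Reachable N t (i, d)) (he : ggEdge N t (i, d) u) :
    ggCost N t w u ≤ ggCost N t w (i, d) + ggWt w (i, d) u := by
  obtain ⟨l, hl⟩ := exists_isPath_of_reachable hu
  exact cost_le_cost_add hl he

theorem ggCost_le_of_del (hu : Reachable N t (i - 1, d + 1)) (hv : ggVertex N t (i, d)) :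
    ggCost N t w (i, d) ≤ ggCost N t w (i - 1, d + 1) + 1 := by
  have := ggCost_le_of_ggEdge (w := w) hu ⟨hu.1, hv, Or.inl (by simp)⟩
  rwa [ggWt_of_snd_ne (by dsimp only; omega)] at this

theorem ggCost_le_of_ins (hu : Reachable N t (i, d - 1)) (hv : ggVertex N t (i, d)) :
    ggCost N t w (i, d) ≤ ggCost N t w (i, d - 1) + 1 := by
  have := ggCost_le_of_ggEdge (w := w) hu ⟨hu.1, hv, Or.inr (Or.inl (by simp))⟩
  rwa [ggWt_of_snd_ne (by dsimp only; omega)] at this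

theorem ggCost_eq_pred_add (h : Reachable N t (i, d)) (h0 : (i, d) ≠ (0, 0)) :
    (Reachable N t (i - 1, d) ∧ ggCost N t w (i - 1, d) + w i d = ggCost N t w (i, d)) ∨
    (Reachable N t (i - 1, d + 1) ∧ ggCost N t w (i - 1, d + 1) + 1 = ggCost N t w (i, d)) ∨
    (Reachable N t (i, d - 1) ∧ ggCost N t w (i, d - 1) + 1 = ggCost N t w (i, d)) := by
  obtain ⟨l₀, hl₀⟩ := exists_isPath_of_reachable h
  obtain ⟨u, l, hl, ⟨-, -, hshape⟩, hcost⟩ := hl₀.exists_cost_add_eq_cost (wt := ggWt w) h0.symm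
  have hu := reachable_of_isPath hl
  obtain ⟨a, b⟩ := u
  simp only [Prod.mk.injEq] at hshape
  rcases hshape with ⟨rfl, rfl⟩ | ⟨rfl, rfl⟩ | ⟨rfl, rfl⟩
  · right; left
    simp only [add_sub_cancel_right, sub_add_cancel] at hu hcost ⊢
    exact ⟨hu, by rwa [ggWt_of_snd_ne (by dsimp only; omega)] at hcost⟩
  · right; right
    simp only [add_sub_cancel_right] at hu hcost ⊢
    exact ⟨hu, by rwa [ggWt_of_snd_ne (by dsimp only; omega)] at hcost⟩
  · left
    simp only [add_sub_cancel_right] at hu hcost ⊢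
    exact ⟨hu, by rwa [ggWt, if_pos rfl] at hcost⟩

theorem ggCost_zero_zero : ggCost N t w (0, 0) = 0 :=
  Nat.le_zero.1 (cost_le_pathCost (l := [(0, 0)]) ⟨rfl, rfl, List.isChain_singleton _⟩)

theorem ggCost_zero_le (hd : 0 ≤ d) (ht : d ≤ t) : ggCost N t w (0, d) ≤ d := by
  induction d, hd using Int.leInduction with
  | base => simp [ggCost_zero_zero]
  | succ d hd ih =>
    have := ggCost_le_of_ins (N := N) (t := t) (w := w) (i := 0) (d := d + 1)
      (reachable_mk_iff.2 (by omega)) (by simp only [ggVertex]; omega)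
    simp only [add_sub_cancel_right] at this
    have := ih (by omega)
    omega

theorem ggCost_neg_le (hi : 0 ≤ i) (hN : i ≤ N) (ht : i ≤ t) : ggCost N t w (i, -i) ≤ i := by
  induction i, hi using Int.leInduction with
  | base => simp [ggCost_zero_zero]
  | succ i hi ih =>
    have := ggCost_le_of_del (N := N) (t := t) (w := w) (i := i + 1) (d := -(i + 1))
      (reachable_mk_iff.2 (by omega)) (by simp only [ggVertex]; omega)
    rw [show (i + 1 - 1, -(i + 1) + 1) = (i, -i) from Prod.ext (by ring) (by ring)] at this
    have := ih (by omega) (by omega)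
    omega

theorem ggCost_le_ggCost_succ_snd_add_one {i d : ℤ} (h : Reachable N t (i, d))
    (hv : ggVertex N t (i, d + 1)) : ggCost N t w (i, d) ≤ ggCost N t w (i, d + 1) + 1 := by
  have hb := reachable_mk_iff.1 h
  rcases ggCost_eq_pred_add (w := w) ⟨hv, by dsimp only; omega⟩
    (by simp only [ne_eq, Prod.mk.injEq]; omega)
    with ⟨hu, hc⟩ | ⟨hu, hc⟩ | ⟨-, hc⟩
  · have := ggCost_le_of_del (w := w) hu h.1
    omega
  · have hub := reachable_mk_iff.1 hu
    have hmid : Reachable N t (i - 1, d + 1) := reachable_mk_iff.2 (by omega)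
    have := ggCost_le_ggCost_succ_snd_add_one hmid hu.1
    have := ggCost_le_of_del (w := w) hmid h.1
    omega
  · simp only [add_sub_cancel_right] at hc
    omega
termination_by i.toNat

theorem ggCost_le_ggCost_succ_fst {i d : ℤ} (h : Reachable N t (i, d))
    (hv : ggVertex N t (i + 1, d)) : ggCost N t w (i, d) ≤ ggCost N t w (i + 1, d) := by
  have hb := reachable_mk_iff.1 h
  rcases ggCost_eq_pred_add (w := w) ⟨hv, by dsimp only; omega⟩
    (by simp only [ne_eq, Prod.mk.injEq]; omega)
    with ⟨-, hc⟩ | ⟨hu, hc⟩ | ⟨hu, hc⟩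
  · simp only [add_sub_cancel_right] at hc
    omega
  · simp only [add_sub_cancel_right] at hu hc
    have := ggCost_le_ggCost_succ_snd_add_one (w := w) h hu.1
    omega
  · have hub := reachable_mk_iff.1 hu
    by_cases hid : i + d = 0
    · obtain rfl : d = -i := by omega
      have := ggCost_neg_le (N := N) (t := t) (w := w) (i := i) (by omega) (by omega) (by omega)
      have := natAbs_le_ggCost (w := w) hu
      omega
    · have hprev : Reachable N t (i, d - 1) := reachable_mk_iff.2 (by omega)
      have := ggCost_le_ggCost_succ_fst hprev hu.1
      have := ggCost_le_of_ins (w := w) hprev h.1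
      omega
termination_by (i + d).toNat

theorem ggCost_le_ggCost_of_fst_le (h : Reachable N t (i, d)) (hj : ggVertex N t (j, d))
    (hij : i ≤ j) : ggCost N t w (i, d) ≤ ggCost N t w (j, d) := by
  induction j, hij using Int.leInduction with
  | base => rfl
  | succ j hij ih =>
    have hb := reachable_mk_iff.1 h
    have hj' : Reachable N t (j, d) := reachable_mk_iff.2 (by simp only [ggVertex] at hj; omega)
    exact (ih hj'.1).trans (ggCost_le_ggCost_succ_fst hj' hj)

theorem Potent.ggCost_lt_succ_fst {v : ℤ × ℤ} (hp : Potent N t w v) (h : Reachable N t v)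
    (hN : v.1 + 1 ≤ N) (hw : w (v.1 + 1) v.2 = 1) :
    ggCost N t w v < ggCost N t w (v.1 + 1, v.2) := by
  induction hp with
  | mk v _ hLw _ hUw ihL ihU =>
  obtain ⟨i, d⟩ := v
  dsimp only at *
  have hb := reachable_mk_iff.1 h
  by_contra! hle
  -- The vertical edge into `(i + 1, d)` costs `1`, so an optimal path enters diagonally; the
  -- inequalities then force `(i, d)` to be dominated from that side, contradicting potency.
  rcases ggCost_eq_pred_add (N := N) (t := t) (w := w) (i := i + 1) (d := d)
    (reachable_mk_iff.2 (by omega)) (by simp only [ne_eq, Prod.mk.injEq]; omega)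
    with ⟨-, hc⟩ | ⟨hu, hc⟩ | ⟨hu, hc⟩
  · simp only [add_sub_cancel_right] at hc
    omega
  · simp only [add_sub_cancel_right] at hu hc
    have hub := reachable_mk_iff.1 hu
    by_cases hi : i = 0
    · subst hi
      have := ggCost_zero_le (N := N) (t := t) (w := w) (d := d) (by omega) (by omega)
      have := natAbs_le_ggCost (w := w) hu
      omega
    have hmid : Reachable N t (i - 1, d + 1) := reachable_mk_iff.2 (by omega)
    have hA := ggCost_le_ggCost_succ_fst (w := w) hmid (by simpa using hu.1)
    have hdel := ggCost_le_of_del (w := w) hmid h.1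
    simp only [sub_add_cancel] at hA ihU
    have hdom : DomU N t w (i, d) := ⟨h, hmid, by dsimp only; omega⟩
    have := ihU hdom hmid (by omega) (hUw hdom)
    omega
  · have hub := reachable_mk_iff.1 hu
    by_cases hid : i + d = 0
    · obtain rfl : d = -i := by omega
      have := ggCost_neg_le (N := N) (t := t) (w := w) (i := i) (by omega) (by omega) (by omega)
      have := natAbs_le_ggCost (w := w) hu
      omega
    have hprev : Reachable N t (i, d - 1) := reachable_mk_iff.2 (by omega)
    have hA := ggCost_le_ggCost_succ_fst (w := w) hprev hu.1
    have hins := ggCost_le_of_ins (w := w) hprev h.1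
    have hdom : DomL N t w (i, d) := ⟨h, hprev, by dsimp only; omega⟩
    have := ihL hdom hprev hN (hLw hdom)
    omega

theorem Potent.ggCost_lt_of_fst_lt (hp : Potent N t w (i, d)) (h : Reachable N t (i, d))
    (hw : w (i + 1) d = 1) (hij : i < j) (hj : ggVertex N t (j, d)) :
    ggCost N t w (i, d) < ggCost N t w (j, d) := by
  have hb := reachable_mk_iff.1 h
  simp only [ggVertex] at hj
  calc ggCost N t w (i, d) < ggCost N t w (i + 1, d) := hp.ggCost_lt_succ_fst h (by omega) hw
    _ ≤ ggCost N t w (j, d) :=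
      ggCost_le_ggCost_of_fst_le (reachable_mk_iff.2 (by omega))
        (by simp only [ggVertex]; omega) hij

end GridGraph

theorem stmt16_general (N t : ℕ) (w : ℤ → ℤ → ℕ)
    (d : ℤ) (hr : Reachable N t ((N : ℤ), d)) :
    ({i : ℤ | 0 ≤ i ∧ i ≤ (N : ℤ) - 1 ∧ Reachable N t (i, d) ∧ Potent N t w (i, d) ∧
        w (i + 1) d = 1}.ncard : ℤ)
      ≤ (ggCost N t w ((N : ℤ), d) : ℤ) - |d| := by
  set S := {i : ℤ | 0 ≤ i ∧ i ≤ (N : ℤ) - 1 ∧ Reachable N t (i, d) ∧ Potent N t w (i, d) ∧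
    w (i + 1) d = 1}
  have hrN := reachable_mk_iff.1 hr
  have hlt : ∀ i ∈ S, ∀ j, i < j → j ≤ N → ggCost N t w (i, d) < ggCost N t w (j, d) :=
    fun i ⟨_, _, hi, hp, hw⟩ j hij hjN =>
      hp.ggCost_lt_of_fst_lt hi hw hij (by simp only [ggVertex]; omega)
  have hcard : S.ncard ≤ (Set.Ico d.natAbs (ggCost N t w (N, d))).ncard :=
    Set.ncard_le_ncard_of_injOn (fun i => ggCost N t w (i, d))
      (fun i hi => ⟨natAbs_le_ggCost hi.2.2.1, hlt i hi N (by linarith [hi.2.1]) le_rfl⟩)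
      (StrictMonoOn.injOn fun i hi j hj hij => hlt i hi j hij (by linarith [hj.2.1]))
  rw [Set.ncard_Ico_nat] at hcard
  have := natAbs_le_ggCost (w := w) hr
  rw [Int.abs_eq_natAbs]
  omega

theorem stmt16 (N t : ℕ) (w : ℤ → ℤ → ℕ)
    (hw1 : ∀ i d, w i d ≤ 1)
    (hw0 : ∀ i d : ℤ, ¬(1 ≤ i ∧ i ≤ (N : ℤ) ∧ -(t : ℤ) ≤ d ∧ d ≤ (t : ℤ)) → w i d = 0)
    (d : ℤ) (hr : Reachable N t ((N : ℤ), d)) :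
    ({i : ℤ | 0 ≤ i ∧ i ≤ (N : ℤ) - 1 ∧ Reachable N t (i, d) ∧ Potent N t w (i, d) ∧
        w (i + 1) d = 1}.ncard : ℤ)
      ≤ (ggCost N t w ((N : ℤ), d) : ℤ) - |d| :=
  stmt16_general N t w d hr

end Stmt16
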